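/- arXiv:2312.05242 — 2 statements merged into one kernel-verified Lean document; each statement's English description precedes it below -/
import Mathlib

section
/- Let G be a simple, locally finite hypergraph with no isolated vertices and no nontrivial automorphism. If Γ_G(s) and Γ_G(t) are isomorphic connected components of Γ_G, then they are equal (i.e., s and t have finite symmetric difference). -/
/-!
An isomorphism `φ : Γ_G(s) ≃ Γ_G(t)` maps 4-cycles to 4-cycles, and in a 4-cycle of `Γ_G`
opposite edges flip the same vertex in the same direction. Any two edges of `Γ_G(s)` adding the
same vertex `v` are joined by a ladder of 4-cycles, so their images all add, or all delete, one
vertex `f v`. Deletion is impossible: an edge of `G` through `v` and some `w` gives an independent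
`a` with `a + v`, `a + w` independent but `a + v + w` dependent, so `a` is the only common
neighbour of `a + v` and `a + w`, whereas after a deletion their images would have a second one.
Hence `φ a = f '' a` for a bijection `f` of `V`. As `φ` preserves independence, so does `f` on
sets close to `s`, and testing it on `A ∪ e` and on the sets `A ∪ (e \ {u})` for a suitable `A`
shows that `f` maps edges of `G` to edges. Thus `f` is an automorphism of `G`, so `f = id` and
`φ s = s` lies in `Γ_G(t)`.
-/

open scoped symmDiff

variable {V : Type*}

def Indep (E : Set (Finset V)) (s : Set V) : Prop := ∀ e ∈ E, ¬ ((e : Set V) ⊆ s)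

def SimpleHG (E : Set (Finset V)) : Prop :=
  (∀ e ∈ E, 1 < e.card) ∧ ∀ e ∈ E, ∀ e' ∈ E, e ⊆ e' → e = e'

def LocFin (E : Set (Finset V)) : Prop := ∀ v : V, {e ∈ E | v ∈ e}.Finite

def Nbr (E : Set (Finset V)) (v w : V) : Prop := ∃ e ∈ E, v ∈ e ∧ w ∈ e

def Gamma (E : Set (Finset V)) : SimpleGraph {s : Set V // Indep E s} where
  Adj s t := ∃ v, s.1 ∆ t.1 = {v}
  symm := ⟨fun s t ⟨v, h⟩ => ⟨v, by rwa [symmDiff_comm]⟩⟩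
  loopless := ⟨fun s ⟨v, h⟩ => by
    rw [symmDiff_self] at h
    exact absurd h.symm (Set.singleton_ne_empty v)⟩

def Comp (E : Set (Finset V)) (s : Set V) : Set {t : Set V // Indep E t} :=
  {t | (s ∆ t.1).Finite}

def GammaComp (E : Set (Finset V)) (s : Set V) : SimpleGraph (Comp E s) :=
  (Gamma E).induce (Comp E s)

def xset (E : Set (Finset V)) (s : Set V) (v : V) : Set V :=
  s \ insert v {w | Nbr E v w}

def yset (E : Set (Finset V)) (s : Set V) (v : V) : Set V :=
  insert v (xset E s v)

def IsIsoHG {V W : Type*} (ES : Set (Finset V)) (ET : Set (Finset W)) (f : V → W) : Prop :=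
  Function.Bijective f ∧ ∀ e : Finset V, e ∈ ES ↔ ∃ e' ∈ ET, (e' : Set W) = f '' (e : Set V)

theorem symmDiff_eq_iff_eq_symmDiff {α : Type*} [GeneralizedBooleanAlgebra α] {a b c : α} :
    a ∆ b = c ↔ b = a ∆ c := by
  constructor
  · rintro rfl
    exact (symmDiff_symmDiff_cancel_left _ _).symm
  · rintro rfl
    exact symmDiff_symmDiff_cancel_left _ _

namespace Set

variable {α : Type*} {A B C : Set α} {x : α}

theorem Finite.symmDiff_trans (h₁ : (A ∆ B).Finite) (h₂ : (B ∆ C).Finite) : (A ∆ C).Finite :=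
  (h₁.union h₂).subset (symmDiff_triangle A B C)

theorem symmDiff_insert_self (hx : x ∉ A) : A ∆ insert x A = {x} := by
  ext z
  by_cases hz : z = x <;> simp [mem_symmDiff, hz, hx]

theorem symmDiff_sdiff_singleton_self (hx : x ∈ A) : A ∆ (A \ {x}) = {x} := by
  ext z
  by_cases hz : z = x <;> simp [mem_symmDiff, hz, hx]

theorem eq_insert_of_sdiff_eq_singleton (h₁ : B \ A = {x}) (h₂ : A ⊆ B) :
    x ∉ A ∧ B = insert x A := by
  have hx : x ∈ B \ A := h₁ ▸ rfl
  exact ⟨hx.2, by rw [insert_eq, ← h₁, sdiff_union_of_subset h₂]⟩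

/-- In a 4-cycle `A - A' - B' - B` of the cube `Set α` with distinct diagonals, opposite edges
flip the same element in the same direction. -/
theorem sdiff_eq_sdiff_of_square {A' B' : Set α} {p q r m : α}
    (hA : A ∆ A' = {p}) (hB : B ∆ B' = {q}) (hAB : A ∆ B = {r}) (hAB' : A' ∆ B' = {m})
    (hne₁ : A ≠ B') (hne₂ : A' ≠ B) : B \ A = B' \ A' ∧ A \ B = A' \ B' := by
  rw [symmDiff_eq_iff_eq_symmDiff] at hA hB hAB hAB'
  subst hA hAB hB
  have hpr : p ≠ r := by
    rintro rfl
    exact hne₂ rfl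
  have hrq : r ≠ q := by
    rintro rfl
    exact hne₁ (by rw [symmDiff_assoc, symmDiff_self, symmDiff_bot])
  have key : ({r} : Set α) ∆ {q} = {p} ∆ {m} := by
    rwa [symmDiff_assoc, symmDiff_assoc, symmDiff_right_inj] at hAB'
  have hrm : r = m := by simpa [mem_symmDiff, hrq, hpr.symm] using congrArg (r ∈ ·) key
  subst hrm
  have hqp : q = p := by
    rwa [symmDiff_comm ({p} : Set α), symmDiff_right_inj, singleton_eq_singleton_iff] at key
  subst hqp
  constructor <;> ext z <;> by_cases hz : z = r <;> by_cases hz' : z = q <;>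
    simp [mem_symmDiff, hz, hz'] <;> simp_all

theorem eq_insert_insert_of_symmDiff_eq_singleton {S : Set α} {v w γ δ : α} (hv : v ∉ A)
    (hvw : v ≠ w) (h₁ : S ∆ insert v A = {γ}) (h₂ : S ∆ insert w A = {δ}) (hSA : S ≠ A) :
    S = insert v (insert w A) := by
  rw [symmDiff_comm, symmDiff_eq_iff_eq_symmDiff] at h₁ h₂
  have hγ : γ ≠ v := by
    rintro rfl
    refine hSA (h₁.trans ?_)
    ext z
    by_cases hz : z = γ <;> simp [mem_symmDiff, hz, hv]
  have hvS : v ∈ S := by simp [h₁, mem_symmDiff, hγ.symm]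
  have hδ : δ = v := by
    by_contra hδ
    simp [h₂, mem_symmDiff, hvw, hv, Ne.symm hδ] at hvS
  rw [h₂, hδ]
  ext z
  by_cases hz : z = v <;> simp [mem_symmDiff, hz, hv, hvw]

end Set

section Hypergraph

open Set

variable {E : Set (Finset V)} {s : Set V}

theorem Indep.mono {A B : Set V} (hB : Indep E B) (h : A ⊆ B) : Indep E A :=
  fun e he heA => hB e he (heA.trans h)

theorem LocFin.finite_setOf_nbr (hlf : LocFin E) (v : V) : {w | Nbr E v w}.Finite :=
  ((hlf v).biUnion fun e _ => e.finite_toSet).subset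
    fun _ ⟨_, he, hv, hw⟩ => mem_biUnion ⟨he, hv⟩ hw

theorem LocFin.finite_setOf_exists_nbr (hlf : LocFin E) (e : Finset V) :
    {z | ∃ p ∈ e, Nbr E p z}.Finite :=
  (e.finite_toSet.biUnion fun p _ => hlf.finite_setOf_nbr p).subset
    fun _ ⟨_, hp, h⟩ => mem_biUnion hp h

theorem Indep.union_sdiff_singleton (hanti : ∀ e ∈ E, ∀ e' ∈ E, e ⊆ e' → e = e')
    {A : Set V} {e : Finset V} {u : V} (hA : Indep E A) (hAe : ∀ p ∈ e, ∀ z ∈ A, ¬Nbr E p z)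
    (he : e ∈ E) (hu : u ∈ e) : Indep E (A ∪ (↑e \ {u})) := by
  intro e' he' hsub
  by_cases hmeet : ∃ p ∈ e', p ∈ (↑e \ {u} : Set V)
  · obtain ⟨p, hp', hp⟩ := hmeet
    have hsub' : (e' : Set V) ⊆ ↑e \ {u} := fun z hz =>
      (hsub hz).resolve_left fun hzA => hAe p hp.1 z hzA ⟨e', he', hp', hz⟩
    have hee' : e' = e := hanti e' he' e he fun z hz => (hsub' hz).1
    exact (hsub' (hee' ▸ hu : u ∈ (e' : Set V))).2 rfl
  · exact hA e' he' fun z hz => (hsub hz).resolve_right fun hz' => hmeet ⟨z, hz, hz'⟩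

theorem exists_insert_pair_not_indep (hsimp : SimpleHG E) (hlf : LocFin E) (hs : Indep E s)
    {v : V} {e : Finset V} (he : e ∈ E) (hv : v ∈ e) :
    ∃ w a, v ≠ w ∧ v ∉ a ∧ w ∉ a ∧ (s ∆ a).Finite ∧ Indep E (insert v a) ∧
      Indep E (insert w a) ∧ ¬Indep E (insert v (insert w a)) := by
  obtain ⟨w, hw, hwv⟩ := Finset.exists_mem_ne (hsimp.1 e he) v
  set N := {z | ∃ p ∈ e, Nbr E p z}
  have hN : ∀ p ∈ e, p ∈ N := fun p hp => ⟨p, hp, e, he, hp, hp⟩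
  have hA : Indep E (s \ N) := hs.mono sdiff_subset
  have hAe : ∀ p ∈ e, ∀ z ∈ s \ N, ¬Nbr E p z := fun p hp z hz h => hz.2 ⟨p, hp, h⟩
  have hvN := hN v hv
  have hwN := hN w hw
  refine ⟨w, (s \ N) ∪ (↑e \ {v, w}), hwv.symm, ?_, ?_, ?_, ?_, ?_, ?_⟩
  · simp [hvN]
  · simp [hwN]
  · refine ((hlf.finite_setOf_exists_nbr e).union e.finite_toSet).subset fun z hz => ?_
    simp only [mem_symmDiff, mem_union, mem_sdiff, Finset.mem_coe] at hz ⊢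
    tauto
  · refine (hA.union_sdiff_singleton hsimp.2 hAe he hw).mono fun z hz => ?_
    rcases hz with rfl | hz
    · exact Or.inr ⟨hv, hwv.symm⟩
    · simp only [mem_union, mem_sdiff, mem_insert_iff, mem_singleton_iff] at hz ⊢
      tauto
  · refine (hA.union_sdiff_singleton hsimp.2 hAe he hv).mono fun z hz => ?_
    rcases hz with rfl | hz
    · exact Or.inr ⟨hw, hwv⟩
    · simp only [mem_union, mem_sdiff, mem_insert_iff, mem_singleton_iff] at hz ⊢
      tauto
  · refine fun h => h e he fun z hz => ?_
    simp only [mem_insert_iff, mem_union, mem_sdiff, mem_singleton_iff]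
    tauto

end Hypergraph

section Component

open Set

variable {E : Set (Finset V)} {s t : Set V}

theorem gammaComp_adj {a b : Comp E s} :
    (GammaComp E s).Adj a b ↔ ∃ v, a.1.1 ∆ b.1.1 = {v} :=
  Iff.rfl

theorem comp_ext {a b : Comp E s} (h : a.1.1 = b.1.1) : a = b :=
  Subtype.ext (Subtype.ext h)

theorem exists_comp_eq {A : Set V} (hA : Indep E A) (h : (s ∆ A).Finite) :
    ∃ a : Comp E s, a.1.1 = A :=
  ⟨⟨⟨A, hA⟩, h⟩, rfl⟩

theorem comp_finite_symmDiff (a b : Comp E s) : (a.1.1 ∆ b.1.1).Finite :=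
  Finite.symmDiff_trans (symmDiff_comm s a.1.1 ▸ a.2 : (a.1.1 ∆ s).Finite) b.2

theorem exists_comp_eq_insert (a : Comp E s) {x : V} (h : Indep E (insert x a.1.1)) :
    ∃ b : Comp E s, b.1.1 = insert x a.1.1 :=
  exists_comp_eq h <| a.2.symmDiff_trans <| (finite_singleton x).subset fun z hz => by
    simp only [mem_symmDiff, mem_insert_iff] at hz
    tauto

theorem exists_comp_eq_of_subset (a : Comp E s) {A : Set V} (hA : A ⊆ a.1.1)
    (h : (a.1.1 \ A).Finite) : ∃ b : Comp E s, b.1.1 = A :=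
  exists_comp_eq (a.1.2.mono hA) <| a.2.symmDiff_trans <| by rwa [symmDiff_of_ge hA]

variable (φ : GammaComp E s ≃g GammaComp E t)

theorem image_sdiff_eq_of_square {a a' b b' : Comp E s} {v w : V} (hvw : v ≠ w)
    (ha : a.1.1 ∆ a'.1.1 = {w}) (hb : b.1.1 ∆ b'.1.1 = {w}) (hab : a.1.1 ∆ b.1.1 = {v})
    (hab' : a'.1.1 ∆ b'.1.1 = {v}) :
    (φ b).1.1 \ (φ a).1.1 = (φ b').1.1 \ (φ a').1.1 ∧
      (φ a).1.1 \ (φ b).1.1 = (φ a').1.1 \ (φ b').1.1 := by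
  have adj : ∀ {c d : Comp E s} {x : V}, c.1.1 ∆ d.1.1 = {x} →
      ∃ y, (φ c).1.1 ∆ (φ d).1.1 = {y} := fun h => φ.map_adj_iff.2 ⟨_, h⟩
  obtain ⟨p, hp⟩ := adj ha
  obtain ⟨q, hq⟩ := adj hb
  obtain ⟨r, hr⟩ := adj hab
  obtain ⟨m, hm⟩ := adj hab'
  have hne₁ : a ≠ b' := by
    rintro rfl
    rw [symmDiff_comm, hab'] at ha
    exact hvw (singleton_eq_singleton_iff.1 ha)
  have hne₂ : a' ≠ b := by
    rintro rfl
    rw [hab] at ha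
    exact hvw (singleton_eq_singleton_iff.1 ha)
  exact sdiff_eq_sdiff_of_square hp hq hr hm (fun h => hne₁ (φ.injective (comp_ext h)))
    (fun h => hne₂ (φ.injective (comp_ext h)))

theorem image_sdiff_eq_of_subset {a b c d : Comp E s} {v : V} (hva : v ∉ a.1.1)
    (hb : b.1.1 = insert v a.1.1) (hd : d.1.1 = insert v c.1.1) (hca : c.1.1 ⊆ a.1.1) :
    (φ d).1.1 \ (φ c).1.1 = (φ b).1.1 \ (φ a).1.1 ∧
      (φ c).1.1 \ (φ d).1.1 = (φ a).1.1 \ (φ b).1.1 := by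
  have hT : (a.1.1 \ c.1.1).Finite := (comp_finite_symmDiff a c).subset fun z hz => Or.inl hz
  have hc : c.1.1 = a.1.1 \ (a.1.1 \ c.1.1) := (sdiff_sdiff_cancel_left hca).symm
  clear hca
  have hTa : a.1.1 \ c.1.1 ⊆ a.1.1 := sdiff_subset
  generalize a.1.1 \ c.1.1 = T at hT hc hTa
  induction T, hT using Set.Finite.induction_on generalizing c d with
  | empty =>
    obtain rfl : c = a := comp_ext (by rw [hc, sdiff_empty])
    obtain rfl : d = b := comp_ext (by rw [hd, hb])
    exact ⟨rfl, rfl⟩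
  | @insert x T hxT _ ih =>
    have hxa : x ∈ a.1.1 := hTa (mem_insert x T)
    have hxc : x ∉ c.1.1 := by simp [hc]
    have hxv : x ≠ v := fun h => hva (h ▸ hxa)
    have hvc : v ∉ c.1.1 := fun h => hva (hc ▸ h).1
    have hc' : insert x c.1.1 = a.1.1 \ T := by
      rw [hc]
      ext z
      by_cases hz : z = x <;> simp [hz, hxa, hxT]
    obtain ⟨c', hc'eq⟩ := exists_comp_eq_insert c (x := x)
      ((a.1.2.mono sdiff_subset).mono hc'.subset)
    obtain ⟨d', hd'eq⟩ := exists_comp_eq_insert d (x := x) <| b.1.2.mono <| by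
      rw [hd, hb, insert_comm]
      exact insert_subset_insert (hc'.trans_subset sdiff_subset)
    have square := image_sdiff_eq_of_square φ (a := c) (a' := c') (b := d) (b' := d') hxv.symm
      (by rw [hc'eq]; exact symmDiff_insert_self hxc)
      (by rw [hd'eq, hd]; exact symmDiff_insert_self (by simp [hxv, hxc]))
      (by rw [hd]; exact symmDiff_insert_self hvc)
      (by rw [hd'eq, hc'eq, hd, insert_comm]
          exact symmDiff_insert_self (by simp [hxv.symm, hvc]))
    obtain ⟨ih₁, ih₂⟩ := ih (by rw [hd'eq, hc'eq, hd, insert_comm]) (hc'eq.trans hc')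
      ((subset_insert x T).trans hTa)
    exact ⟨square.1.trans ih₁, square.2.trans ih₂⟩

end Component

section Transport

open Set

variable {E : Set (Finset V)} {s t : Set V} (φ : GammaComp E s ≃g GammaComp E t)

theorem image_sdiff_eq_of_insert {a b c d : Comp E s} {v : V} (hva : v ∉ a.1.1)
    (hb : b.1.1 = insert v a.1.1) (hvc : v ∉ c.1.1) (hd : d.1.1 = insert v c.1.1) :
    (φ d).1.1 \ (φ c).1.1 = (φ b).1.1 \ (φ a).1.1 ∧
      (φ c).1.1 \ (φ d).1.1 = (φ a).1.1 \ (φ b).1.1 := by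
  obtain ⟨m, hm⟩ := exists_comp_eq_of_subset a inter_subset_left
    ((comp_finite_symmDiff a c).subset fun z hz => Or.inl ⟨hz.1, fun h => hz.2 ⟨hz.1, h⟩⟩)
  obtain ⟨n, hn⟩ := exists_comp_eq_insert m (x := v) <| b.1.2.mono <| by
    rw [hm, hb]
    exact insert_subset_insert inter_subset_left
  obtain ⟨h₁, h₂⟩ := image_sdiff_eq_of_subset φ hva hb hn (hm ▸ inter_subset_left)
  obtain ⟨h₃, h₄⟩ := image_sdiff_eq_of_subset φ hvc hd hn (hm ▸ inter_subset_right)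
  exact ⟨h₃.symm.trans h₁, h₄.symm.trans h₂⟩

theorem exists_adj_adj_ne {a b c : Comp E t} {x y : V} (hab : a.1.1 ∆ b.1.1 = {x})
    (hac : a.1.1 ∆ c.1.1 = {y}) (hxy : x ≠ y) (hx : x ∈ a.1.1) :
    ∃ d, (GammaComp E t).Adj d b ∧ (GammaComp E t).Adj d c ∧ d ≠ a := by
  rw [symmDiff_eq_iff_eq_symmDiff] at hab hac
  have hxc : x ∈ c.1.1 := by simp [hac, mem_symmDiff, hx, hxy]
  obtain ⟨d, hd⟩ := exists_comp_eq_of_subset c (sdiff_subset : c.1.1 \ {x} ⊆ c.1.1)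
    ((finite_singleton x).subset fun z hz => by simpa [hz.1] using hz.2)
  refine ⟨d, gammaComp_adj.2 ⟨y, ?_⟩, gammaComp_adj.2 ⟨x, ?_⟩, fun hda => ?_⟩
  · rw [hd, hab, hac]
    ext z
    by_cases hz : z = x <;> by_cases hz' : z = y <;> simp [mem_symmDiff, hz, hz', hx, hxy]
    tauto
  · rw [hd, symmDiff_comm, symmDiff_sdiff_singleton_self hxc]
  · rw [hda] at hd
    exact (hd ▸ hx).2 rfl

theorem eq_of_adj_insert_of_adj_insert {a b c d : Comp E s} {v w : V} (hva : v ∉ a.1.1)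
    (hvw : v ≠ w) (hb : b.1.1 = insert v a.1.1) (hc : c.1.1 = insert w a.1.1)
    (hdep : ¬Indep E (insert v (insert w a.1.1))) (hdb : (GammaComp E s).Adj d b)
    (hdc : (GammaComp E s).Adj d c) : d = a := by
  by_contra hda
  obtain ⟨γ, hγ⟩ := gammaComp_adj.1 hdb
  obtain ⟨δ, hδ⟩ := gammaComp_adj.1 hdc
  rw [hb] at hγ
  rw [hc] at hδ
  refine hdep ?_
  rw [← eq_insert_insert_of_symmDiff_eq_singleton hva hvw hγ hδ fun h => hda (comp_ext h)]
  exact d.1.2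

theorem image_subset_image_insert {a b c : Comp E s} {v w : V} (hvw : v ≠ w) (hva : v ∉ a.1.1)
    (hwa : w ∉ a.1.1) (hb : b.1.1 = insert v a.1.1) (hc : c.1.1 = insert w a.1.1)
    (hdep : ¬Indep E (insert v (insert w a.1.1))) : (φ a).1.1 ⊆ (φ b).1.1 := by
  obtain ⟨x, hx⟩ := gammaComp_adj.1 <| φ.map_adj_iff.2 <|
    gammaComp_adj.2 ⟨v, hb ▸ symmDiff_insert_self hva⟩
  obtain ⟨y, hy⟩ := gammaComp_adj.1 <| φ.map_adj_iff.2 <|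
    gammaComp_adj.2 ⟨w, hc ▸ symmDiff_insert_self hwa⟩
  intro z hz
  by_contra hzb
  obtain rfl : z = x := by
    have h : z ∈ (φ a).1.1 ∆ (φ b).1.1 := Or.inl ⟨hz, hzb⟩
    rwa [hx] at h
  have hxy : z ≠ y := by
    rintro rfl
    have hbc : b = c := φ.injective (comp_ext (by
      rw [symmDiff_eq_iff_eq_symmDiff] at hx hy
      rw [hx, hy]))
    rw [hbc, hc] at hb
    exact hvw ((insert_inj hwa).1 hb).symm
  obtain ⟨d, hdb, hdc, hda⟩ := exists_adj_adj_ne hx hy hxy hz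
  refine hda ?_
  rw [← φ.apply_symm_apply d]
  congr 1
  refine eq_of_adj_insert_of_adj_insert hva hvw hb hc hdep ?_ ?_
  · exact φ.map_adj_iff.1 (by rwa [φ.apply_symm_apply])
  · exact φ.map_adj_iff.1 (by rwa [φ.apply_symm_apply])

end Transport

section Induced

open Set Function

variable {E : Set (Finset V)} {s t : Set V} (φ : GammaComp E s ≃g GammaComp E t)

def MapsInsert (f : V → V) : Prop :=
  ∀ (a b : Comp E s) (v : V), v ∉ a.1.1 → b.1.1 = insert v a.1.1 →
    f v ∉ (φ a).1.1 ∧ (φ b).1.1 = insert (f v) (φ a).1.1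

theorem exists_mapsInsert (hsimp : SimpleHG E) (hlf : LocFin E) (hni : ∀ v : V, ∃ e ∈ E, v ∈ e)
    (hs : Indep E s) : ∃ f, MapsInsert φ f := by
  suffices h : ∀ v, ∃ u, ∀ (a b : Comp E s), v ∉ a.1.1 → b.1.1 = insert v a.1.1 →
      u ∉ (φ a).1.1 ∧ (φ b).1.1 = insert u (φ a).1.1 by
    choose f hf using h
    exact ⟨f, fun a b v => hf v a b⟩
  intro v
  obtain ⟨e, he, hve⟩ := hni v
  obtain ⟨w, a₀, hvw, hva₀, hwa₀, hfin, hv, hw, hdep⟩ :=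
    exists_insert_pair_not_indep hsimp hlf hs he hve
  obtain ⟨a, ha⟩ := exists_comp_eq (hv.mono (subset_insert v a₀)) hfin
  obtain ⟨b₀, hb₀⟩ := exists_comp_eq_insert a (x := v) (ha ▸ hv)
  obtain ⟨c, hc⟩ := exists_comp_eq_insert a (x := w) (ha ▸ hw)
  rw [← ha] at hva₀ hwa₀ hdep
  have hsub := image_subset_image_insert φ hvw hva₀ hwa₀ hb₀ hc hdep
  obtain ⟨u, hu⟩ := gammaComp_adj.1 <| φ.map_adj_iff.2 <|
    gammaComp_adj.2 ⟨v, hb₀ ▸ symmDiff_insert_self hva₀⟩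
  rw [Set.symmDiff_def, sdiff_eq_empty.2 hsub, empty_union] at hu
  refine ⟨u, fun a' b' hva' hb' => ?_⟩
  obtain ⟨h₁, h₂⟩ := image_sdiff_eq_of_insert φ hva₀ hb₀ hva' hb'
  exact eq_insert_of_sdiff_eq_singleton (h₁.trans hu)
    (sdiff_eq_empty.1 (h₂.trans (sdiff_eq_empty.2 hsub)))

variable {φ}

theorem MapsInsert.mem_image {f : V → V} (hf : MapsInsert φ f) {a : Comp E s} {v : V}
    (hv : v ∈ a.1.1) : f v ∈ (φ a).1.1 := by
  obtain ⟨a', ha'⟩ := exists_comp_eq_of_subset a (sdiff_subset : a.1.1 \ {v} ⊆ a.1.1)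
    ((finite_singleton v).subset fun z hz => by simpa [hz.1] using hz.2)
  rw [(hf a' a v (by simp [ha']) (by rw [ha', insert_sdiff_singleton, insert_eq_of_mem hv])).2]
  exact mem_insert _ _

theorem MapsInsert.leftInverse (hsimp : SimpleHG E) (hlf : LocFin E)
    (hni : ∀ v : V, ∃ e ∈ E, v ∈ e) (hs : Indep E s) {f g : V → V} (hf : MapsInsert φ f)
    (hg : MapsInsert φ.symm g) : LeftInverse g f := by
  intro v
  obtain ⟨e, he, hve⟩ := hni v
  obtain ⟨-, a₀, -, hva₀, -, hfin, hv, -⟩ := exists_insert_pair_not_indep hsimp hlf hs he hve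
  obtain ⟨a, ha⟩ := exists_comp_eq (hv.mono (subset_insert v a₀)) hfin
  obtain ⟨b, hb⟩ := exists_comp_eq_insert a (x := v) (ha ▸ hv)
  rw [← ha] at hva₀
  obtain ⟨hfa, hfb⟩ := hf a b v hva₀ hb
  obtain ⟨hga, hgb⟩ := hg (φ a) (φ b) (f v) hfa hfb
  simp only [RelIso.symm_apply_apply] at hga hgb
  exact (insert_inj hga).1 (hgb.symm.trans hb)

variable (φ) in
theorem exists_equiv_image (hsimp : SimpleHG E) (hlf : LocFin E) (hni : ∀ v : V, ∃ e ∈ E, v ∈ e)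
    (hs : Indep E s) (ht : Indep E t) :
    ∃ f : V ≃ V, ∀ a : Comp E s, (φ a).1.1 = f '' a.1.1 := by
  obtain ⟨f, hf⟩ := exists_mapsInsert φ hsimp hlf hni hs
  obtain ⟨g, hg⟩ := exists_mapsInsert φ.symm hsimp hlf hni ht
  have hgf := hf.leftInverse hsimp hlf hni hs hg
  have hfg := hg.leftInverse hsimp hlf hni ht (φ := φ.symm) hf
  refine ⟨⟨f, g, hgf, hfg⟩, fun a => Subset.antisymm (fun z hz => ⟨g z, ?_, hfg z⟩) ?_⟩
  · simpa using hg.mem_image hz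
  · rintro _ ⟨v, hv, rfl⟩
    exact hf.mem_image hv

end Induced

section Automorphism

open Set

variable {E : Set (Finset V)} {s t : Set V} {φ : GammaComp E s ≃g GammaComp E t} {f : V ≃ V}

theorem indep_image_iff (hs : Indep E s) (hf : ∀ a, (φ a).1.1 = f '' a.1.1) {A : Set V}
    (hA : (s ∆ A).Finite) : Indep E (f '' A) ↔ Indep E A := by
  refine ⟨fun h => ?_, fun h => ?_⟩
  · obtain ⟨a₀, ha₀⟩ := exists_comp_eq (s := s) hs (by simp)
    have hfin : (t ∆ (f '' A)).Finite := (φ a₀).2.symmDiff_trans <| by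
      rw [hf, ha₀, ← image_symmDiff f.injective]
      exact hA.image f
    obtain ⟨b, hb⟩ := exists_comp_eq h hfin
    have hA' : (φ.symm b).1.1 = A :=
      f.injective.image_injective (by rw [← hf, φ.apply_symm_apply, hb])
    exact hA' ▸ (φ.symm b).1.2
  · obtain ⟨a, ha⟩ := exists_comp_eq h hA
    exact ha ▸ hf a ▸ (φ a).1.2

theorem exists_mem_coe_eq_image (hanti : ∀ e ∈ E, ∀ e' ∈ E, e ⊆ e' → e = e') (hlf : LocFin E)
    (hs : Indep E s) (hf : ∀ a, (φ a).1.1 = f '' a.1.1) {e : Finset V} (he : e ∈ E) :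
    ∃ e' ∈ E, (e' : Set V) = f '' e := by
  rcases e.eq_empty_or_nonempty with rfl | ⟨u, hu⟩
  · exact ⟨∅, he, by simp⟩
  set N := {z | ∃ p ∈ e, Nbr E p z}
  set A := (s \ N) \ f ⁻¹' {z | Nbr E (f u) z}
  have hAe : ∀ p ∈ e, ∀ z ∈ A, ¬Nbr E p z := fun p hp z hz h => hz.1.2 ⟨p, hp, h⟩
  have hfin : ∀ F ⊆ (e : Set V), (s ∆ (A ∪ F)).Finite := fun F hF =>
    (((hlf.finite_setOf_exists_nbr e).union ((hlf.finite_setOf_nbr (f u)).preimage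
      f.injective.injOn)).union e.finite_toSet).subset fun z hz => by
        simp only [A, mem_symmDiff, mem_union, mem_sdiff, mem_preimage] at hz ⊢
        have := @hF z
        tauto
  have hindep : ∀ u' ∈ e, Indep E (f '' (A ∪ (↑e \ {u'}))) := fun u' hu' =>
    (indep_image_iff hs hf (hfin _ sdiff_subset)).2
      ((hs.mono (sdiff_subset.trans sdiff_subset)).union_sdiff_singleton hanti hAe he hu')
  obtain ⟨e', he', he'A⟩ : ∃ e' ∈ E, (e' : Set V) ⊆ f '' (A ∪ e) := by
    have := (indep_image_iff hs hf (hfin _ subset_rfl)).not.2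
      fun h => h e he subset_union_right
    simpa [Indep] using this
  have hmem : ∀ u' ∈ e, f u' ∈ e' := by
    intro u' hu'
    by_contra h
    refine hindep u' hu' e' he' fun z hz => ?_
    obtain ⟨m, hm, rfl⟩ := he'A hz
    refine ⟨m, hm.imp_right fun hme => ⟨hme, ?_⟩, rfl⟩
    rintro rfl
    exact h hz
  refine ⟨e', he', Subset.antisymm (fun z hz => ?_) ?_⟩
  · obtain ⟨m, hm | hm, rfl⟩ := he'A hz
    · exact absurd ⟨e', he', hmem u hu, hz⟩ hm.2
    · exact ⟨m, hm, rfl⟩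
  · rintro _ ⟨m, hm, rfl⟩
    exact hmem m hm

theorem isIsoHG_of_image_eq (hanti : ∀ e ∈ E, ∀ e' ∈ E, e ⊆ e' → e = e') (hlf : LocFin E)
    (hs : Indep E s) (ht : Indep E t) (hf : ∀ a, (φ a).1.1 = f '' a.1.1) : IsIsoHG E E f := by
  have hf' : ∀ b, (φ.symm b).1.1 = f.symm '' b.1.1 := fun b => by
    rw [← f.symm_image_image (φ.symm b).1.1, ← hf, φ.apply_symm_apply]
  refine ⟨f.bijective, fun e => ⟨exists_mem_coe_eq_image hanti hlf hs hf, ?_⟩⟩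
  rintro ⟨e', he', he'e⟩
  obtain ⟨e'', he'', he''e'⟩ := exists_mem_coe_eq_image hanti hlf ht hf' he'
  have he''e : e'' = e := Finset.coe_injective (by rw [he''e', he'e, f.symm_image_image])
  exact he''e ▸ he''

end Automorphism

theorem stmt11 (E : Set (Finset V)) (hsimp : SimpleHG E) (hlf : LocFin E)
    (hni : ∀ v : V, ∃ e ∈ E, v ∈ e)
    (hasym : ∀ f : V → V, IsIsoHG E E f → ∀ v, f v = v)
    (s t : Set V) (hs : Indep E s) (ht : Indep E t)
    (h : Nonempty (GammaComp E s ≃g GammaComp E t)) :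
    (s ∆ t).Finite := by
  obtain ⟨φ⟩ := h
  obtain ⟨f, hf⟩ := exists_equiv_image φ hsimp hlf hni hs ht
  have hid : ∀ v, f v = v := hasym f (isIsoHG_of_image_eq hsimp.2 hlf hs ht hf)
  obtain ⟨a, ha⟩ := exists_comp_eq (s := s) hs (by simp)
  have hφa : (φ a).1.1 = s := by simp [hf, ha, hid]
  have hfin : (t ∆ (φ a).1.1).Finite := (φ a).2
  rwa [hφa, symmDiff_comm] at hfin
end

section
/- Let P be the one-way infinite path graph on vertex set ℕ (edges {n, n+1}), viewed as a hypergraph. Then every connected component of Γ_P (the infinite Fibonacci cube Γ_∞) is asymmetric, and no two distinct connected components of Γ_P are isomorphic. -/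
open scoped symmDiff

variable {V : Type*}

def PathE : Set (Finset ℕ) := {e | ∃ n : ℕ, e = {n, n + 1}}

/-!
An edge of `Gamma E` flips a single vertex, its direction. Opposite edges of a square in a
component have the same direction, and any two edges of direction `v` in one component are joined
by a ladder of squares, so an isomorphism `φ` of components induces a bijection on directions
(`MapsDir`). Flips at non-neighbours commute while flips at the two ends of an edge do not, so for
`P` this bijection is an automorphism of the one-way infinite path, hence the identity. Then
`a ∆ φ a` is one and the same set `D` for all vertices `a`, and `D = ∅`, since otherwise some
independent `a` makes `a ∆ D` contain an edge of `P`.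
-/

section Hypercube

variable {α : Type*} {A B C D : Set α}

lemma symmDiff_singleton_eq_insert {u : Set α} {v : α} (hv : v ∉ u) : u ∆ {v} = insert v u := by
  ext z; by_cases hz : z = v <;> simp [Set.mem_symmDiff, hz, hv]

lemma symmDiff_insert_self {u : Set α} {v : α} (hv : v ∉ u) : u ∆ insert v u = {v} := by
  rw [← symmDiff_singleton_eq_insert hv, symmDiff_symmDiff_cancel_left]

lemma eq_insert_of_symmDiff_eq_singleton {v : α} (h : A ∆ B = {v}) (hv : v ∉ A) :
    B = insert v A := by
  rw [← symmDiff_singleton_eq_insert hv, ← h, symmDiff_symmDiff_cancel_left]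

lemma insert_symmDiff_insert {v : α} (hA : v ∉ A) (hB : v ∉ B) :
    insert v A ∆ insert v B = A ∆ B := by
  ext z; by_cases hz : z = v <;> simp [Set.mem_symmDiff, hz, hA, hB]

lemma symmDiff_chain {X Y : Set α} (hAB : A ∆ B = X) (hBC : B ∆ C = Y) : A ∆ C = X ∆ Y := by
  rw [← hAB, ← hBC, symmDiff_assoc, symmDiff_symmDiff_cancel_left]

lemma symmDiff_eq_symmDiff_of_parallel {X : Set α} (hAB : A ∆ B = X) (hCD : C ∆ D = X) :
    A ∆ C = B ∆ D := by
  rw [← symmDiff_symmDiff_cancel_left A B, hAB, ← hCD, symmDiff_assoc,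
    symmDiff_symmDiff_cancel_right]

lemma eq_of_symmDiff_square {x x' : α} (hAB : A ∆ B = {x}) (hBC : ∃ y, B ∆ C = {y})
    (hCD : C ∆ D = {x'}) (hDA : ∃ y, D ∆ A = {y}) (hAC : A ≠ C) (hBD : B ≠ D) : x = x' := by
  obtain ⟨y, hBC⟩ := hBC
  obtain ⟨y', hDA⟩ := hDA
  have hxy : x ≠ y := by
    rintro rfl
    exact hAC (symmDiff_eq_bot.1 (by rw [symmDiff_chain hAB hBC, symmDiff_self]))
  have hyx' : y ≠ x' := by
    rintro rfl
    exact hBD (symmDiff_eq_bot.1 (by rw [symmDiff_chain hBC hCD, symmDiff_self]))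
  have hcycle : ({x} ∆ {y} : Set α) = {x'} ∆ {y'} := by
    rw [← symmDiff_chain hAB hBC, symmDiff_comm, symmDiff_chain hCD hDA]
  have hx := congrArg (x ∈ ·) hcycle
  have hy := congrArg (y ∈ ·) hcycle
  simp only [Set.mem_symmDiff, Set.mem_singleton_iff] at hx hy
  grind

lemma eq_or_eq_of_flip_neighbor {c e : Set α} {v w i j : α} (hvw : v ≠ w)
    (hi : c ∆ {v} ∆ e = {i}) (hj : c ∆ {w} ∆ e = {j}) :
    e = c ∨ e = c ∆ {v} ∆ {w} := by
  have he : e = c ∆ {v} ∆ {i} := by rw [← hi, symmDiff_symmDiff_cancel_left]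
  have hflips : ({v} ∆ {w} : Set α) = {i} ∆ {j} := by
    rw [← symmDiff_chain hi (symmDiff_comm (c ∆ {w}) e ▸ hj), symmDiff_symmDiff_symmDiff_comm,
      symmDiff_self, bot_symmDiff]
  by_cases hiv : i = v
  · left
    rw [he, hiv, symmDiff_symmDiff_cancel_right]
  · right
    have hv := congrArg (v ∈ ·) hflips
    have hi' := congrArg (i ∈ ·) hflips
    simp only [Set.mem_symmDiff, Set.mem_singleton_iff] at hv hi'
    rw [he, show i = w by grind]

lemma exists_flip_toward (hfin : (A ∆ B).Finite) (hne : A ≠ B) :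
    ∃ w, (A ∆ {w} ⊆ A ∨ A ∆ {w} ⊆ B) ∧ (A ∆ {w} ∆ B).ncard < (A ∆ B).ncard := by
  have hflip : ∀ w ∈ A ∆ B, A ∆ {w} ∆ B = (A ∆ B) \ {w} := fun w hw => by
    ext z; simp only [Set.mem_symmDiff, Set.mem_sdiff, Set.mem_singleton_iff] at hw ⊢; grind
  have hlt : ∀ w ∈ A ∆ B, (A ∆ {w} ∆ B).ncard < (A ∆ B).ncard := fun w hw => by
    rw [hflip w hw]; exact Set.ncard_sdiff_singleton_lt_of_mem hw hfin
  by_cases hAB : (A \ B).Nonempty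
  · obtain ⟨w, hwA, hwB⟩ := hAB
    have hw : w ∈ A ∆ B := Or.inl ⟨hwA, hwB⟩
    refine ⟨w, Or.inl fun z hz => ?_, hlt w hw⟩
    by_cases hzw : z = w <;> simp_all [Set.mem_symmDiff]
  · have hAB : A ⊆ B := Set.sdiff_eq_empty.1 (Set.not_nonempty_iff_eq_empty.1 hAB)
    obtain ⟨w, hw⟩ := Set.nonempty_iff_ne_empty.2 (mt symmDiff_eq_bot.1 hne)
    have hwA : w ∉ A := fun h => hw.elim (fun h' => h'.2 (hAB h)) (fun h' => h'.2 h)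
    have hwB : w ∈ B := (hw.resolve_left fun h' => hwA h'.1).1
    refine ⟨w, Or.inr ?_, hlt w hw⟩
    rw [symmDiff_singleton_eq_insert hwA]
    exact Set.insert_subset hwB hAB

lemma finite_symmDiff_symmDiff_singleton {s u : Set α} (h : (s ∆ u).Finite) (z : α) :
    (s ∆ (u ∆ {z})).Finite := by
  rw [← symmDiff_assoc]
  exact h.symmDiff (Set.finite_singleton z)

end Hypercube

section Independence

variable {E : Set (Finset V)} {s T : Set V}

lemma Indep.mono_s12 (hT : Indep E T) (hsT : s ⊆ T) : Indep E s :=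
  fun e he h => hT e he (h.trans hsT)

lemma Indep.symmDiff_singleton_symmDiff_singleton {p q : V} (hp : Indep E (T ∆ {p}))
    (hq : Indep E (T ∆ {q})) (hpq : ¬ Nbr E p q) : Indep E (T ∆ {p} ∆ {q}) := by
  intro e he hsub
  by_cases hqe : q ∈ e
  · by_cases hpe : p ∈ e
    · exact hpq ⟨e, he, hpe, hqe⟩
    · refine hq e he fun z hz => ?_
      have := hsub hz
      have hzp : z ≠ p := fun h => hpe (h ▸ hz)
      simp only [Set.mem_symmDiff, Set.mem_singleton_iff] at this ⊢
      tauto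
  · refine hp e he fun z hz => ?_
    have := hsub hz
    have hzq : z ≠ q := fun h => hqe (h ▸ hz)
    simp only [Set.mem_symmDiff, Set.mem_singleton_iff] at this ⊢
    tauto

lemma xset_subset (v : V) : xset E s v ⊆ s := Set.sdiff_subset

lemma notMem_xset {v w : V} (h : w = v ∨ Nbr E v w) : w ∉ xset E s v :=
  fun hw => hw.2 h

lemma indep_yset (hE : ∀ e ∈ E, 1 < e.card) (hs : Indep E s) (v : V) :
    Indep E (yset E s v) := by
  intro e he hsub
  by_cases hve : v ∈ e
  · have hcard : e.card ≤ 1 := Finset.card_le_one.2 fun a ha b hb => by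
      have hav : a = v := (hsub ha).resolve_right (notMem_xset (Or.inr ⟨e, he, hve, ha⟩))
      have hbv : b = v := (hsub hb).resolve_right (notMem_xset (Or.inr ⟨e, he, hve, hb⟩))
      rw [hav, hbv]
    exact (hE e he).not_ge hcard
  · refine hs e he fun z hz => xset_subset v ((hsub hz).resolve_left ?_)
    rintro rfl
    exact hve hz

lemma finite_symmDiff_xset (hE : LocFin E) (v : V) : (s ∆ xset E s v).Finite := by
  refine (((hE v).biUnion fun e _ => e.finite_toSet).insert v).subset fun z hz => ?_
  rcases hz with ⟨hzs, hzx⟩ | ⟨hzx, hzs⟩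
  · have hz : z = v ∨ Nbr E v z := not_not.1 fun h => hzx ⟨hzs, h⟩
    rcases hz with rfl | ⟨e, he, hve, hze⟩
    · exact Set.mem_insert _ _
    · exact Set.mem_insert_of_mem _ (Set.mem_biUnion ⟨he, hve⟩ hze)
  · exact absurd (xset_subset v hzx) hzs

lemma finite_symmDiff_yset (hE : LocFin E) (v : V) : (s ∆ yset E s v).Finite := by
  rw [yset, ← symmDiff_singleton_eq_insert (notMem_xset (Or.inl rfl))]
  exact finite_symmDiff_symmDiff_singleton (finite_symmDiff_xset hE v) v

end Independence

namespace Comp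

variable {E : Set (Finset V)} {s : Set V}

def mk {u : Set V} (hu : Indep E u) (hsu : (s ∆ u).Finite) : Comp E s := ⟨⟨u, hu⟩, hsu⟩

@[simp]
lemma coe_mk {u : Set V} (hu : Indep E u) (hsu : (s ∆ u).Finite) : (mk hu hsu).1.1 = u := rfl

lemma ext {a b : Comp E s} (h : a.1.1 = b.1.1) : a = b :=
  Subtype.ext (Subtype.ext h)

lemma flip_induction {P : Comp E s → Prop} (a' : Comp E s) (h' : P a')
    (step : ∀ (a c : Comp E s) (w : V), c.1.1 = a.1.1 ∆ {w} →
      (c.1.1 ⊆ a.1.1 ∨ c.1.1 ⊆ a'.1.1) → P c → P a)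
    (a : Comp E s) : P a := by
  induction hn : (a.1.1 ∆ a'.1.1).ncard using Nat.strong_induction_on generalizing a with
  | _ n ih =>
    by_cases haa' : a.1.1 = a'.1.1
    · rwa [ext haa']
    have hfin : (a.1.1 ∆ a'.1.1).Finite :=
      (a.2.union a'.2).subset (symmDiff_comm s a.1.1 ▸ symmDiff_triangle ..)
    obtain ⟨w, hsub, hlt⟩ := exists_flip_toward hfin haa'
    have hind : Indep E (a.1.1 ∆ {w}) := hsub.elim a.1.2.mono_s12 a'.1.2.mono_s12
    exact step a (mk hind (finite_symmDiff_symmDiff_singleton a.2 w)) w rfl hsub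
      (ih _ (hn ▸ hlt) _ rfl)

lemma exists_flip_flip {c : Comp E s} {p q : V} (hp : Indep E (c.1.1 ∆ {p}))
    (hq : Indep E (c.1.1 ∆ {q})) (hpq : ¬ Nbr E p q) :
    ∃ z : Comp E s, z.1.1 = c.1.1 ∆ {p} ∆ {q} :=
  ⟨mk (hp.symmDiff_singleton_symmDiff_singleton hq hpq) (finite_symmDiff_symmDiff_singleton
    (finite_symmDiff_symmDiff_singleton c.2 p) q), rfl⟩

end Comp

section Direction

variable {W : Type*} {E : Set (Finset V)} {F : Set (Finset W)} {s : Set V} {t : Set W}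
  (φ : GammaComp E s ≃g GammaComp F t)

def MapsDir (v : V) (x : W) : Prop :=
  ∃ a b : Comp E s, a.1.1 ∆ b.1.1 = {v} ∧ (φ a).1.1 ∆ (φ b).1.1 = {x}

variable {φ}

lemma exists_symmDiff_apply_eq_singleton {a b : Comp E s} {v : V} (h : a.1.1 ∆ b.1.1 = {v}) :
    ∃ x, (φ a).1.1 ∆ (φ b).1.1 = {x} :=
  φ.map_rel_iff.2 ⟨v, h⟩

lemma MapsDir.symm {v : V} {x : W} (h : MapsDir φ v x) : MapsDir φ.symm x v := by
  obtain ⟨a, b, hab, hx⟩ := h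
  exact ⟨φ a, φ b, hx, by simpa using hab⟩

lemma MapsDir.exists_insert {v : V} {x : W} (h : MapsDir φ v x) :
    ∃ a b : Comp E s, v ∉ a.1.1 ∧ b.1.1 = insert v a.1.1 ∧ (φ a).1.1 ∆ (φ b).1.1 = {x} := by
  obtain ⟨a, b, hab, hx⟩ := h
  by_cases hva : v ∈ a.1.1
  · have hvb : v ∉ b.1.1 := fun hvb => by
      have := Set.ext_iff.1 hab v
      simp [Set.mem_symmDiff, hva, hvb] at this
    rw [symmDiff_comm] at hab hx
    exact ⟨b, a, hvb, eq_insert_of_symmDiff_eq_singleton hab hvb, hx⟩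
  · exact ⟨a, b, hva, eq_insert_of_symmDiff_eq_singleton hab hva, hx⟩

lemma image_direction_eq_of_insert {a b a' b' : Comp E s} {v : V} (ha : v ∉ a.1.1)
    (hb : b.1.1 = insert v a.1.1) (ha' : v ∉ a'.1.1) (hb' : b'.1.1 = insert v a'.1.1) {x x' : W}
    (hx : (φ a).1.1 ∆ (φ b).1.1 = {x}) (hx' : (φ a').1.1 ∆ (φ b').1.1 = {x'}) : x = x' := by
  refine Comp.flip_induction (P := fun a => v ∉ a.1.1 → ∀ b : Comp E s,
    b.1.1 = insert v a.1.1 → ∀ x, (φ a).1.1 ∆ (φ b).1.1 = {x} → x = x') a' ?_ ?_ a ha b hb x hx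
  · intro _ b hb x hx
    rw [Comp.ext (hb.trans hb'.symm)] at hx
    exact Set.singleton_eq_singleton_iff.1 (hx.symm.trans hx')
  clear ha hb hx b x a
  intro a c w hc hsub ih ha b hb x hx
  have hvc : v ∉ c.1.1 := hsub.elim (fun h hv => ha (h hv)) (fun h hv => ha' (h hv))
  have hind : Indep E (insert v c.1.1) := hsub.elim
    (fun h => b.1.2.mono_s12 (hb ▸ Set.insert_subset_insert h))
    (fun h => b'.1.2.mono_s12 (hb' ▸ Set.insert_subset_insert h))
  have hfin : (s ∆ insert v c.1.1).Finite :=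
    symmDiff_singleton_eq_insert hvc ▸ finite_symmDiff_symmDiff_singleton c.2 v
  set d : Comp E s := Comp.mk hind hfin
  have hca : c.1.1 ∆ a.1.1 = {w} := by rw [hc, symmDiff_comm, symmDiff_symmDiff_cancel_left]
  obtain ⟨x'', hx''⟩ := exists_symmDiff_apply_eq_singleton (φ := φ) (a := c) (b := d)
    (symmDiff_insert_self hvc)
  refine (eq_of_symmDiff_square hx ?_ (symmDiff_comm (φ c).1.1 _ ▸ hx'') ?_ ?_ ?_).trans
    (ih hvc d rfl x'' hx'')
  · refine exists_symmDiff_apply_eq_singleton (v := w) ?_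
    rw [hb, show d.1.1 = insert v c.1.1 from rfl, insert_symmDiff_insert ha hvc, symmDiff_comm, hca]
  · exact exists_symmDiff_apply_eq_singleton hca
  · refine fun h => ha ?_
    rw [φ.injective (Comp.ext h)]
    exact Set.mem_insert v _
  · refine fun h => hvc ?_
    rw [← φ.injective (Comp.ext h), hb]
    exact Set.mem_insert v _

lemma MapsDir.unique {v : V} {x x' : W} (h : MapsDir φ v x) (h' : MapsDir φ v x') : x = x' := by
  obtain ⟨a, b, ha, hb, hx⟩ := h.exists_insert
  obtain ⟨a', b', ha', hb', hx'⟩ := h'.exists_insert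
  exact image_direction_eq_of_insert ha hb ha' hb' hx hx'

lemma MapsDir.symmDiff_apply {v : V} {x : W} (h : MapsDir φ v x) {a b : Comp E s}
    (hab : a.1.1 ∆ b.1.1 = {v}) : (φ a).1.1 ∆ (φ b).1.1 = {x} := by
  obtain ⟨y, hy⟩ := exists_symmDiff_apply_eq_singleton (φ := φ) hab
  rwa [h.unique ⟨a, b, hab, hy⟩]

lemma exists_mapsDir (hE : ∀ e ∈ E, 1 < e.card) (hLF : LocFin E) (hs : Indep E s) (v : V) :
    ∃ x, MapsDir φ v x := by
  have hv : v ∉ xset E s v := notMem_xset (Or.inl rfl)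
  let a : Comp E s := Comp.mk (hs.mono_s12 (xset_subset v)) (finite_symmDiff_xset hLF v)
  let b : Comp E s := Comp.mk (indep_yset hE hs v) (finite_symmDiff_yset hLF v)
  obtain ⟨x, hx⟩ := exists_symmDiff_apply_eq_singleton (φ := φ) (a := a) (b := b)
    (symmDiff_insert_self hv)
  exact ⟨x, a, b, symmDiff_insert_self hv, hx⟩

lemma exists_flip_corner (hE : ∀ e ∈ E, 1 < e.card) (hLF : LocFin E) (hs : Indep E s)
    (v w : V) : ∃ c a b : Comp E s, v ∉ c.1.1 ∧ w ∉ c.1.1 ∧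
      a.1.1 = c.1.1 ∆ {v} ∧ b.1.1 = c.1.1 ∆ {w} := by
  set u := xset E (xset E s v) w
  have hus : u ⊆ xset E s v := xset_subset w
  have hvu : v ∉ u := fun h => notMem_xset (Or.inl rfl) (hus h)
  have hwu : w ∉ u := notMem_xset (Or.inl rfl)
  have hfin : (s ∆ u).Finite := ((finite_symmDiff_xset hLF v).union
    (finite_symmDiff_xset hLF w)).subset (symmDiff_triangle ..)
  have hinda : Indep E (u ∆ {v}) := by
    rw [symmDiff_singleton_eq_insert hvu]
    exact (indep_yset hE hs v).mono_s12 (Set.insert_subset_insert hus)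
  have hindb : Indep E (u ∆ {w}) := by
    rw [symmDiff_singleton_eq_insert hwu]
    exact indep_yset hE (hs.mono_s12 (xset_subset v)) w
  exact ⟨Comp.mk (hs.mono_s12 (hus.trans (xset_subset v))) hfin,
    Comp.mk hinda (finite_symmDiff_symmDiff_singleton hfin v),
    Comp.mk hindb (finite_symmDiff_symmDiff_singleton hfin w), hvu, hwu, rfl, rfl⟩

-- If `p` and `q` were not neighbours, the images of the flips at `v` and `w` from a common corner
-- would span a square, whose preimage would have to contain the edge `{v, w}`.
lemma MapsDir.nbr [DecidableEq V] (hE : ∀ e ∈ E, 1 < e.card) (hLF : LocFin E)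
    (hs : Indep E s) {v w : V} (hvw : ({v, w} : Finset V) ∈ E) {p q : W} (hp : MapsDir φ v p)
    (hq : MapsDir φ w q) : Nbr F p q := by
  have hne : v ≠ w := by
    rintro rfl
    simpa using hE _ hvw
  have hpq : p ≠ q := fun h => hne (hp.symm.unique (h ▸ hq.symm))
  obtain ⟨c, a, b, hvc, hwc, ha, hb⟩ := exists_flip_corner hE hLF hs v w
  have hca : (φ c).1.1 ∆ (φ a).1.1 = {p} :=
    hp.symmDiff_apply (by rw [ha, symmDiff_symmDiff_cancel_left])
  have hcb : (φ c).1.1 ∆ (φ b).1.1 = {q} :=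
    hq.symmDiff_apply (by rw [hb, symmDiff_symmDiff_cancel_left])
  set T := (φ c).1.1
  have ha' : (φ a).1.1 = T ∆ {p} := by rw [← hca, symmDiff_symmDiff_cancel_left]
  have hb' : (φ b).1.1 = T ∆ {q} := by rw [← hcb, symmDiff_symmDiff_cancel_left]
  by_contra hnbr
  obtain ⟨z, hz⟩ : ∃ z : Comp F t, z.1.1 = T ∆ {p} ∆ {q} :=
    Comp.exists_flip_flip (ha' ▸ (φ a).1.2) (hb' ▸ (φ b).1.2) hnbr
  have haz : (φ a).1.1 ∆ z.1.1 = {q} := by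
    rw [ha', hz, symmDiff_symmDiff_cancel_left]
  have hbz : (φ b).1.1 ∆ z.1.1 = {p} := by
    rw [hb', hz, symmDiff_right_comm T {p} {q}, symmDiff_symmDiff_cancel_left]
  obtain ⟨i, hi⟩ := exists_symmDiff_apply_eq_singleton (φ := φ.symm) haz
  obtain ⟨j, hj⟩ := exists_symmDiff_apply_eq_singleton (φ := φ.symm) hbz
  rw [φ.symm_apply_apply, ha] at hi
  rw [φ.symm_apply_apply, hb] at hj
  rcases eq_or_eq_of_flip_neighbor hne hi hj with he | he
  · have hzc : z.1.1 = T := by rw [← φ.apply_symm_apply z, Comp.ext he]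
    refine hpq (Set.singleton_eq_singleton_iff.1 ?_)
    rw [← hca, ← haz, ← hzc, symmDiff_comm]
  · refine (φ.symm z).1.2 {v, w} hvw fun y hy => ?_
    rw [he]
    rcases (by simpa using hy : y = v ∨ y = w) with rfl | rfl
    · simp [Set.mem_symmDiff, hvc, hne]
    · simp [Set.mem_symmDiff, hwc, hne.symm]

end Direction

lemma symmDiff_apply_eq_of_mapsDir_self {E F : Set (Finset V)} {s t : Set V}
    {φ : GammaComp E s ≃g GammaComp F t} (hφ : ∀ v, MapsDir φ v v) (a a' : Comp E s) :
    a.1.1 ∆ (φ a).1.1 = a'.1.1 ∆ (φ a').1.1 := by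
  refine Comp.flip_induction (P := fun a => a.1.1 ∆ (φ a).1.1 = a'.1.1 ∆ (φ a').1.1) a' rfl
    ?_ a
  intro a c w hc _ ih
  have hac : a.1.1 ∆ c.1.1 = {w} := by rw [hc, symmDiff_symmDiff_cancel_left]
  rw [← ih]
  exact symmDiff_eq_symmDiff_of_parallel hac ((hφ w).symmDiff_apply hac)

section Path

lemma card_gt_one_of_mem_pathE : ∀ e ∈ PathE, 1 < e.card := by
  rintro e ⟨n, rfl⟩
  simp

lemma locFin_pathE : LocFin PathE := by
  intro v
  refine (Set.toFinite {{v - 1, v}, {v, v + 1}}).subset ?_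
  rintro e ⟨⟨n, rfl⟩, hv⟩
  simp only [Finset.mem_insert, Finset.mem_singleton] at hv
  rcases hv with rfl | rfl
  · simp
  · simp

lemma Nbr.le_add_one_of_pathE {a b : ℕ} (h : Nbr PathE a b) : a ≤ b + 1 ∧ b ≤ a + 1 := by
  obtain ⟨e, ⟨n, rfl⟩, ha, hb⟩ := h
  simp only [Finset.mem_insert, Finset.mem_singleton] at ha hb
  omega

lemma Equiv.apply_eq_self_of_step {f : ℕ ≃ ℕ}
    (hf : ∀ n, f (n + 1) = f n + 1 ∨ f n = f (n + 1) + 1)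
    (hg : ∀ n, f.symm (n + 1) = f.symm n + 1 ∨ f.symm n = f.symm (n + 1) + 1) (n : ℕ) :
    f n = n := by
  have h0 : f 0 = 0 := by
    by_contra h0
    obtain ⟨m, hm⟩ : ∃ m, f 0 = m + 1 := ⟨f 0 - 1, by omega⟩
    have hm0 : f.symm (m + 1) = 0 := by rw [← hm, f.symm_apply_apply]
    have h1 : f.symm m = 1 := by have := hg m; omega
    have h2 : f.symm (m + 1 + 1) = 1 := by have := hg (m + 1); omega
    have := f.symm.injective (h1.trans h2.symm)
    omega
  suffices ∀ n, f n = n ∧ f (n + 1) = n + 1 from (this n).1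
  intro n
  induction n with
  | zero => exact ⟨h0, by have := hf 0; simp only [zero_add] at this ⊢; omega⟩
  | succ k ih =>
    refine ⟨ih.2, ?_⟩
    have hk : f (k + 1 + 1) ≠ f k := fun h => by
      have := f.injective h
      omega
    have := hf (k + 1)
    omega


variable {s t : Set ℕ}

lemma step_of_mapsDir_pathE (hs : Indep PathE s) {φ : GammaComp PathE s ≃g GammaComp PathE t}
    {f : ℕ → ℕ} (hf : ∀ v, MapsDir φ v (f v)) (hinj : Function.Injective f) (n : ℕ) :
    f (n + 1) = f n + 1 ∨ f n = f (n + 1) + 1 := by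
  have hnbr := (MapsDir.nbr card_gt_one_of_mem_pathE locFin_pathE hs ⟨n, rfl⟩ (hf n)
    (hf (n + 1))).le_add_one_of_pathE
  have hne : f n ≠ f (n + 1) := fun h => by
    have := hinj h
    omega
  omega

lemma mapsDir_self_of_pathE (hs : Indep PathE s) (ht : Indep PathE t)
    (φ : GammaComp PathE s ≃g GammaComp PathE t) (v : ℕ) : MapsDir φ v v := by
  choose f hf using exists_mapsDir (φ := φ) card_gt_one_of_mem_pathE locFin_pathE hs
  choose g hg using exists_mapsDir (φ := φ.symm) card_gt_one_of_mem_pathE locFin_pathE ht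
  have hgf : ∀ v, g (f v) = v := fun v => ((hf v).symm.unique (hg (f v))).symm
  have hfg : ∀ x, f (g x) = x := fun x =>
    ((φ.symm_symm ▸ (hg x).symm : MapsDir φ (g x) x).unique (hf (g x))).symm
  let e : ℕ ≃ ℕ := ⟨f, g, hgf, hfg⟩
  have hfv : f v = v :=
    Equiv.apply_eq_self_of_step (f := e) (step_of_mapsDir_pathE hs hf e.injective)
      (step_of_mapsDir_pathE ht hg e.symm.injective) v
  simpa [hfv] using hf v

lemma eq_empty_of_indep_symmDiff_pathE (hs : Indep PathE s) {D : Set ℕ}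
    (hD : ∀ a : Comp PathE s, Indep PathE (a.1.1 ∆ D)) : D = ∅ := by
  refine Set.eq_empty_of_forall_notMem fun v hv => ?_
  have hvx : v ∉ xset PathE s (v + 1) :=
    notMem_xset (Or.inr ⟨{v, v + 1}, ⟨v, rfl⟩, by simp, by simp⟩)
  have hv1x : v + 1 ∉ xset PathE s (v + 1) := notMem_xset (Or.inl rfl)
  obtain ⟨a, hva, hv1a⟩ : ∃ a : Comp PathE s, v ∉ a.1.1 ∧ (v + 1 ∈ a.1.1 ↔ v + 1 ∉ D) := by
    by_cases hv1 : v + 1 ∈ D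
    · exact ⟨Comp.mk (hs.mono_s12 (xset_subset _)) (finite_symmDiff_xset locFin_pathE _), hvx,
        by simpa [hv1] using hv1x⟩
    · refine ⟨Comp.mk (indep_yset card_gt_one_of_mem_pathE hs (v + 1))
        (finite_symmDiff_yset locFin_pathE _), ?_, by simp [hv1, yset]⟩
      rintro (h | h)
      exacts [by omega, hvx h]
  refine hD a {v, v + 1} ⟨v, rfl⟩ fun z hz => ?_
  simp only [Finset.coe_insert, Finset.coe_singleton, Set.mem_insert_iff,
    Set.mem_singleton_iff] at hz
  rcases hz with rfl | rfl
  · exact Or.inr ⟨hv, hva⟩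
  · by_cases hv1 : v + 1 ∈ D
    · exact Or.inr ⟨hv1, fun h => hv1a.1 h hv1⟩
    · exact Or.inl ⟨hv1a.2 hv1, hv1⟩

lemma GammaComp.pathE_iso_apply_val (hs : Indep PathE s) (ht : Indep PathE t)
    (φ : GammaComp PathE s ≃g GammaComp PathE t) (a : Comp PathE s) : (φ a).1.1 = a.1.1 := by
  let base : Comp PathE s := Comp.mk hs (by simp)
  have happly : ∀ a, (φ a).1.1 = a.1.1 ∆ (base.1.1 ∆ (φ base).1.1) := fun a => by
    rw [← symmDiff_apply_eq_of_mapsDir_self (mapsDir_self_of_pathE hs ht φ) a base,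
      symmDiff_symmDiff_cancel_left]
  have hD := eq_empty_of_indep_symmDiff_pathE hs fun a => happly a ▸ (φ a).1.2
  rw [happly, hD]
  exact symmDiff_bot _

end Path

theorem stmt12 :
    (∀ (s : Set ℕ) (_hs : Indep PathE s) (φ : GammaComp PathE s ≃g GammaComp PathE s)
        (x : Comp PathE s), φ x = x) ∧
    (∀ (s t : Set ℕ) (_hs : Indep PathE s) (_ht : Indep PathE t),
        Nonempty (GammaComp PathE s ≃g GammaComp PathE t) → (s ∆ t).Finite) := by
  refine ⟨fun s hs φ a => Comp.ext (GammaComp.pathE_iso_apply_val hs hs φ a), ?_⟩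
  rintro s t hs ht ⟨φ⟩
  let base : Comp PathE s := Comp.mk hs (by simp)
  have hfin : (t ∆ (φ base).1.1).Finite := (φ base).2
  rw [GammaComp.pathE_iso_apply_val hs ht] at hfin
  exact symmDiff_comm t s ▸ hfin
end
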